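/- For every tree T, the zero forcing number equals the path cover number: Z(T) = pc(T). -/

import Mathlib

/-- The forcing process: vertices that eventually get colored starting from `S`.
A colored vertex with exactly one uncolored neighbor forces that neighbor. -/
inductive SimpleGraph.Forced {V : Type*} (G : SimpleGraph V) (S : Set V) : V → Prop
  | init (v : V) (hv : v ∈ S) : SimpleGraph.Forced G S v
  | force (u w : V) (hu : SimpleGraph.Forced G S u) (hadj : G.Adj u w)
      (huniq : ∀ x, G.Adj u x → x ≠ w → SimpleGraph.Forced G S x) :
      SimpleGraph.Forced G S w

/-- `S` is a zero forcing set if the forcing process colors every vertex. -/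
def SimpleGraph.IsZeroForcingSet {V : Type*} (G : SimpleGraph V) (S : Set V) : Prop :=
  ∀ v, G.Forced S v

/-- The zero forcing number `Z(G)`. -/
noncomputable def SimpleGraph.zeroForcingNumber {V : Type*} (G : SimpleGraph V) : ℕ :=
  sInf {n | ∃ S : Set V, G.IsZeroForcingSet S ∧ S.ncard = n}

/-- A total forcing set: a zero forcing set inducing a subgraph without isolated vertices. -/
def SimpleGraph.IsTotalForcingSet {V : Type*} (G : SimpleGraph V) (S : Set V) : Prop :=
  G.IsZeroForcingSet S ∧ ∀ v ∈ S, ∃ u ∈ S, G.Adj v u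

/-- The total forcing number `F_t(G)`. -/
noncomputable def SimpleGraph.totalForcingNumber {V : Type*} (G : SimpleGraph V) : ℕ :=
  sInf {n | ∃ S : Set V, G.IsTotalForcingSet S ∧ S.ncard = n}

/-- A set of vertices that is the vertex set of a path (as a subgraph) of `G`. -/
def SimpleGraph.IsPathSet {V : Type*} (G : SimpleGraph V) (P : Set V) : Prop :=
  ∃ (u v : V) (w : G.Walk u v), w.IsPath ∧ {x | x ∈ w.support} = P

/-- A path cover: a collection of vertex-disjoint paths partitioning the vertex set. -/
def SimpleGraph.IsPathCover {V : Type*} (G : SimpleGraph V) (P : Set (Set V)) : Prop :=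
  (∀ Q ∈ P, G.IsPathSet Q) ∧ P.PairwiseDisjoint id ∧ ⋃₀ P = Set.univ

/-- The path cover number `pc(G)`. -/
noncomputable def SimpleGraph.pathCoverNumber {V : Type*} (G : SimpleGraph V) : ℕ :=
  sInf {n | ∃ P : Set (Set V), G.IsPathCover P ∧ P.ncard = n}

/-- The matching number `α'(G)`. -/
noncomputable def SimpleGraph.matchingNumber {V : Type*} (G : SimpleGraph V) : ℕ :=
  sSup {n | ∃ M : G.Subgraph, M.IsMatching ∧ M.edgeSet.ncard = n}

/-- A leaf is a vertex with exactly one neighbor. -/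
def SimpleGraph.IsLeaf {V : Type*} (G : SimpleGraph V) (v : V) : Prop :=
  (G.neighborSet v).ncard = 1

/-!
Every graph satisfies `pc ≤ Z`: starting from a zero forcing set `S`, each vertex forces at most
once, so the forcing chains starting at the vertices of `S` are paths covering the graph. They are
built by induction on the number of uncolored vertices: after the first force `u → w`, delete the
edges at `u` and color `w`; the chain of `u` is then `u` followed by the chain of `w`.

Conversely, let a tree `T` be covered by at least two paths. Root `T` and pick a covering path `Q`
whose vertex `m` nearest to the root is as far from the root as possible. Since every vertex has a
unique neighbor towards the root, `Q` is joined to the rest of `T` only by the edge from `m` towards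
the root. Coloring an end of `Q` together with a zero forcing set of `T - Q` forces all of `T`, so
induction on the number of vertices gives `Z(T) ≤ pc(T)`.
-/

namespace SimpleGraph

variable {V : Type*} {G T : SimpleGraph V} {S : Set V}

lemma isZeroForcingSet_univ : G.IsZeroForcingSet Set.univ :=
  fun v => .init v trivial

lemma zeroForcingNumber_le (hS : G.IsZeroForcingSet S) :
    G.zeroForcingNumber ≤ S.ncard :=
  Nat.sInf_le ⟨S, hS, rfl⟩

lemma exists_isZeroForcingSet_ncard_eq (G : SimpleGraph V) :
    ∃ S, G.IsZeroForcingSet S ∧ S.ncard = G.zeroForcingNumber :=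
  Nat.sInf_mem (s := {n | ∃ S, G.IsZeroForcingSet S ∧ S.ncard = n})
    ⟨_, Set.univ, isZeroForcingSet_univ, rfl⟩

lemma pathCoverNumber_le {P : Set (Set V)} (hP : G.IsPathCover P) :
    G.pathCoverNumber ≤ P.ncard :=
  Nat.sInf_le ⟨P, hP, rfl⟩

lemma Forced.exists_first_force {v : V} (hv : G.Forced S v) (hvS : v ∉ S) :
    ∃ u ∈ S, ∃ w ∉ S, G.Adj u w ∧ ∀ x, G.Adj u x → x ≠ w → x ∈ S := by
  induction hv with
  | init v hv => exact absurd hv hvS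
  | force u w _ hadj _ ihu ihx =>
    by_cases hu : u ∈ S
    · by_cases hx : ∃ x, G.Adj u x ∧ x ≠ w ∧ x ∉ S
      · obtain ⟨x, hux, hxw, hxS⟩ := hx
        exact ihx x hux hxw hxS
      · push Not at hx
        exact ⟨u, hu, w, hvS, hadj, hx⟩
    · exact ihu hu

/-- After the force `u → w`, the vertex `u` plays no further role. -/
lemma Forced.deleteIncidenceSet {u w v : V} (hu : u ∈ S)
    (huS : ∀ x, G.Adj u x → x ≠ w → x ∈ S) (hv : G.Forced S v) :
    (G.deleteIncidenceSet u).Forced (insert w S) v := by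
  induction hv with
  | init v hv => exact .init v (Set.mem_insert_of_mem w hv)
  | force x v _ hadj _ ihx ihy =>
    by_cases hxu : x = u
    · subst hxu
      by_cases hvw : v = w
      · exact .init v (hvw ▸ Set.mem_insert v S)
      · exact .init v (Set.mem_insert_of_mem w (huS v hadj hvw))
    by_cases hvu : v = u
    · exact .init v (Set.mem_insert_of_mem w (hvu ▸ hu))
    exact .force x v ihx (deleteIncidenceSet_adj.mpr ⟨hadj, hxu, hvu⟩)
      fun y hy hyv => ihy y (deleteIncidenceSet_adj.mp hy).1 hyv

/-- `ρ v` is the vertex of `S` at which the forcing chain through `v` starts. -/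
structure IsChainMap (G : SimpleGraph V) (S : Set V) (ρ : V → V) : Prop where
  mem : ∀ v, ρ v ∈ S
  chain : ∀ s ∈ S, ∃ (b : V) (p : G.Walk s b), p.IsPath ∧ ∀ v, v ∈ p.support ↔ ρ v = s

lemma isChainMap_id_univ : G.IsChainMap Set.univ id :=
  ⟨fun _ => trivial, fun s _ => ⟨s, .nil, by simp, by simp [eq_comm]⟩⟩

lemma IsChainMap.eq_self_of_isolated {ρ : V → V} (hρ : G.IsChainMap S ρ) {u : V} (hu : u ∈ S)
    (hiso : ∀ x, ¬ G.Adj u x) {v : V} : ρ v = u ↔ v = u := by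
  obtain ⟨b, p, -, hp⟩ := hρ.chain u hu
  cases p with
  | nil => simpa using (hp v).symm
  | cons h _ => exact absurd h (hiso _)

lemma IsChainMap.of_deleteIncidenceSet [DecidableEq V] {u w : V} (hu : u ∈ S) (hw : w ∉ S)
    (huw : G.Adj u w) {ρ : V → V} (hρ : (G.deleteIncidenceSet u).IsChainMap (insert w S) ρ) :
    G.IsChainMap S fun v => if ρ v = w then u else ρ v := by
  have hρu : ∀ {v}, ρ v = u ↔ v = u := hρ.eq_self_of_isolated (Set.mem_insert_of_mem w hu)
    fun x h => (deleteIncidenceSet_adj.mp h).2.1 rfl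
  have hwu : w ≠ u := fun h => hw (h ▸ hu)
  refine ⟨fun v => ?_, fun s hs => ?_⟩
  · split_ifs with h
    · exact hu
    · exact (Set.mem_insert_iff.mp (hρ.mem v)).resolve_left h
  by_cases hsu : s = u
  · subst hsu
    obtain ⟨b, p, hp, hpρ⟩ := hρ.chain w (Set.mem_insert w S)
    have hsp : s ∉ p.support := fun h => hwu ((hpρ s).mp h ▸ hρu.mpr rfl)
    refine ⟨b, .cons huw (p.mapLe (deleteIncidenceSet_le G s)), ?_, fun v => ?_⟩
    · simpa [Walk.cons_isPath_iff, Walk.support_mapLe_eq_support] using ⟨hp, hsp⟩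
    · simp only [Walk.support_cons, Walk.support_mapLe_eq_support, List.mem_cons, hpρ]
      split_ifs with h
      · simp [h]
      · rw [hρu]; tauto
  · obtain ⟨b, p, hp, hpρ⟩ := hρ.chain s (Set.mem_insert_of_mem w hs)
    have hsw : s ≠ w := fun h => hw (h ▸ hs)
    refine ⟨b, p.mapLe (deleteIncidenceSet_le G u), hp.mapLe _, fun v => ?_⟩
    rw [Walk.support_mapLe_eq_support, hpρ]
    split_ifs with h
    · exact ⟨fun h' => absurd (h ▸ h') hsw.symm, fun h' => absurd h' (Ne.symm hsu)⟩
    · rfl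

theorem IsZeroForcingSet.exists_isChainMap [Finite V] {G : SimpleGraph V} {S : Set V}
    (hS : G.IsZeroForcingSet S) : ∃ ρ, G.IsChainMap S ρ := by
  classical
  by_cases hSu : S = Set.univ
  · exact hSu ▸ ⟨id, isChainMap_id_univ⟩
  obtain ⟨v, hv⟩ := (Set.ne_univ_iff_exists_notMem S).mp hSu
  obtain ⟨u, hu, w, hw, huw, huS⟩ := (hS v).exists_first_force hv
  have : (insert w S)ᶜ.ncard < Sᶜ.ncard :=
    Set.ncard_lt_ncard (compl_lt_compl_iff_lt.mpr (Set.ssubset_insert hw))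
  obtain ⟨ρ, hρ⟩ := IsZeroForcingSet.exists_isChainMap (G := G.deleteIncidenceSet u)
    fun x => (hS x).deleteIncidenceSet hu huS
  exact ⟨_, hρ.of_deleteIncidenceSet hu hw huw⟩
termination_by Sᶜ.ncard

theorem IsChainMap.isPathCover {ρ : V → V} (hρ : G.IsChainMap S ρ) :
    G.IsPathCover ((fun s => {v | ρ v = s}) '' S) := by
  refine ⟨?_, ?_, ?_⟩
  · rintro _ ⟨s, hs, rfl⟩
    obtain ⟨b, p, hp, hpρ⟩ := hρ.chain s hs
    exact ⟨s, b, p, hp, Set.ext hpρ⟩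
  · rintro _ ⟨s, -, rfl⟩ _ ⟨t, -, rfl⟩ hst
    exact Set.disjoint_left.mpr fun v hs ht => hst (by rw [← hs.out, ← ht.out])
  · exact Set.eq_univ_of_forall fun v => ⟨_, ⟨ρ v, hρ.mem v, rfl⟩, rfl⟩

theorem IsZeroForcingSet.exists_isPathCover_ncard_le [Finite V] (hS : G.IsZeroForcingSet S) :
    ∃ P, G.IsPathCover P ∧ P.ncard ≤ S.ncard :=
  have ⟨_, hρ⟩ := hS.exists_isChainMap
  ⟨_, hρ.isPathCover, Set.ncard_image_le S.toFinite⟩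

lemma exists_isPathCover_ncard_eq [Finite V] (G : SimpleGraph V) :
    ∃ P, G.IsPathCover P ∧ P.ncard = G.pathCoverNumber :=
  have ⟨P, hP, _⟩ := isZeroForcingSet_univ.exists_isPathCover_ncard_le (G := G)
  Nat.sInf_mem (s := {n | ∃ P, G.IsPathCover P ∧ P.ncard = n}) ⟨_, P, hP, rfl⟩

theorem pathCoverNumber_le_zeroForcingNumber [Finite V] (G : SimpleGraph V) :
    G.pathCoverNumber ≤ G.zeroForcingNumber := by
  obtain ⟨S, hS, hSZ⟩ := G.exists_isZeroForcingSet_ncard_eq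
  obtain ⟨P, hP, hPS⟩ := hS.exists_isPathCover_ncard_le
  exact hSZ ▸ (pathCoverNumber_le hP).trans hPS

lemma Walk.IsPath.exists_isPath_from_of_mem_support [DecidableEq V] {a b x y : V}
    {w : G.Walk a b} (hw : w.IsPath) (hx : x ∈ w.support) (hy : y ∈ w.support) :
    ∃ (c : V) (q : G.Walk x c), q.IsPath ∧ y ∈ q.support ∧ q.support ⊆ w.support := by
  by_cases h : y ∈ (w.dropUntil x hx).support
  · exact ⟨b, _, hw.dropUntil hx, h, w.support_dropUntil_subset_support hx⟩
  · have hy' : y ∈ (w.takeUntil x hx).support := by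
      rw [← w.take_spec hx, Walk.mem_support_append_iff] at hy
      exact hy.resolve_right h
    refine ⟨a, _, (hw.takeUntil hx).reverse, by simpa using hy', fun v hv => ?_⟩
    exact w.support_takeUntil_subset_support hx (by simpa using hv)

/-- A path in a forest has no chords, so each vertex before `c` forces its successor. -/
theorem IsAcyclic.forced_of_isPath_append (hG : G.IsAcyclic) {a c b : V} (p : G.Walk a c)
    (q : G.Walk c b) (hpq : (p.append q).IsPath) (ha : G.Forced S a)
    (hout : ∀ x ∈ p.support, x ≠ c → ∀ y ∉ (p.append q).support, G.Adj x y → G.Forced S y) :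
    ∀ x ∈ p.support, G.Forced S x := by
  induction p with
  | nil =>
    intro x hx
    rw [Walk.support_nil, List.mem_singleton] at hx
    exact hx ▸ ha
  | @cons a a₁ c hadj p ih =>
    rw [Walk.cons_append, Walk.cons_isPath_iff] at hpq
    have hac : a ≠ c := fun h => hpq.2 (h ▸ (Walk.mem_support_append_iff p q).mpr
      (Or.inl p.end_mem_support))
    have ha₁ : G.Forced S a₁ := by
      refine .force a a₁ ha hadj fun y hay hya₁ => ?_
      by_cases hy : y ∈ (Walk.cons hadj (p.append q)).support
      · exact absurd (by simpa using hG.eq_snd_of_adj_start (hpq.1.cons hpq.2) hay hy) hya₁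
      · exact hout a (by simp) hac y (by simpa using hy) hay
    intro x hx
    rw [Walk.support_cons, List.mem_cons] at hx
    rcases hx with rfl | hx
    · exact ha
    refine ih q hpq.1 ha₁ (fun x hx hxc y hy hxy => ?_) x hx
    by_cases hya : y = a
    · exact hya ▸ ha
    · exact hout x (by simp [hx]) hxc y (by simp [hya, hy]) hxy

theorem Forced.of_induce {s : Set V} {S' : Set s} (hinit : ∀ v ∈ S', G.Forced S v)
    (hout : ∀ (u : s) (x : V), x ∉ s → G.Adj u x → G.Forced S x) {v : s}
    (hv : (G.induce s).Forced S' v) : G.Forced S v := by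
  induction hv with
  | init v hv => exact hinit v hv
  | force u w _ hadj _ ihu ihx =>
    refine .force (G := G) u w ihu hadj fun x hux hxw => ?_
    by_cases hx : x ∈ s
    · exact ihx ⟨x, hx⟩ hux fun h => hxw (congrArg Subtype.val h)
    · exact hout u x hx hux

lemma IsPathSet.induce {A s : Set V} (hA : G.IsPathSet A) (hAs : A ⊆ s) :
    (G.induce s).IsPathSet (Subtype.val ⁻¹' A) := by
  obtain ⟨a, b, w, hw, rfl⟩ := hA
  refine ⟨_, _, w.induce s fun x hx => hAs hx, ?_, ?_⟩
  · rw [← Walk.isPath_map_iff_of_injective (f := (Embedding.induce (G := G) s).toHom)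
      Subtype.val_injective, Walk.map_induce]
    exact hw
  · ext x
    simp

lemma IsPathCover.induce_compl {P : Set (Set V)} (hP : G.IsPathCover P) {Q : Set V}
    (hQ : Q ∈ P) : (G.induce Qᶜ).IsPathCover ((Subtype.val ⁻¹' ·) '' (P \ {Q})) := by
  obtain ⟨hpath, hdisj, hcover⟩ := hP
  refine ⟨?_, ?_, ?_⟩
  · rintro _ ⟨A, ⟨hA, hAQ⟩, rfl⟩
    exact (hpath A hA).induce (hdisj hA hQ hAQ).subset_compl_right
  · rintro _ ⟨A, ⟨hA, -⟩, rfl⟩ _ ⟨B, ⟨hB, -⟩, rfl⟩ hAB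
    exact (hdisj hA hB fun h => hAB (h ▸ rfl)).preimage _
  · refine Set.eq_univ_of_forall fun v => ?_
    obtain ⟨A, hA, hvA⟩ := Set.mem_sUnion.mp (hcover ▸ Set.mem_univ v.1)
    exact ⟨_, ⟨A, ⟨hA, fun h => v.2 (h ▸ hvA)⟩, rfl⟩, hvA⟩

lemma Walk.IsPath.support_subset_compl {Q : Set V} {y z : V} {w : G.Walk y z} (hw : w.IsPath)
    (hy : y ∉ Q) (hcross : ∀ x ∈ Q, ∀ y ∉ Q, G.Adj x y → y = z) : ∀ v ∈ w.support, v ∉ Q := by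
  induction w with
  | nil => simpa using hy
  | @cons y y₁ z hadj w ih =>
    rw [Walk.cons_isPath_iff] at hw
    have hy₁ : y₁ ∉ Q := fun h => hw.2 (hcross y₁ h y hy hadj.symm ▸ w.end_mem_support)
    simpa [hy] using ih hw.1 hy₁ hcross

lemma IsTree.induce_compl (hT : T.IsTree) {Q : Set V} {z : V} (hz : z ∉ Q)
    (hcross : ∀ x ∈ Q, ∀ y ∉ Q, T.Adj x y → y = z) : (T.induce Qᶜ).IsTree := by
  have hreach : ∀ y : ↥Qᶜ, (T.induce Qᶜ).Reachable y ⟨z, hz⟩ := fun y => by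
    obtain ⟨w, hw⟩ := (hT.connected y z).exists_isPath
    exact ⟨w.induce Qᶜ (hw.support_subset_compl y.2 hcross)⟩
  have : Nonempty ↥Qᶜ := ⟨⟨z, hz⟩⟩
  exact ⟨⟨fun u v => (hreach u).trans (hreach v).symm⟩, hT.isAcyclic.induce _⟩

namespace IsTree

variable (hT : T.IsTree) (r : V)
include hT

lemma dist_eq_add_one_of_mem_support {x y : V} {p : T.Walk r x} (hp : p.length = T.dist r x)
    (hxy : T.Adj x y) (hy : y ∈ p.support) : T.dist r x = T.dist r y + 1 := by
  obtain ⟨q, hq⟩ := hT.connected.exists_walk_length_eq_dist r y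
  rw [← hp, ← hq, hT.isAcyclic.path_concat (q.isPath_of_length_eq_dist hq)
    (p.isPath_of_length_eq_dist hp) hxy.symm hy, Walk.length_concat]

lemma dist_adj {x y : V} (hxy : T.Adj x y) :
    T.dist r y = T.dist r x + 1 ∨ T.dist r x = T.dist r y + 1 := by
  obtain ⟨p, hp⟩ := hT.connected.exists_walk_length_eq_dist r x
  obtain ⟨q, hq⟩ := hT.connected.exists_walk_length_eq_dist r y
  by_cases hy : y ∈ p.support
  · exact .inr (hT.dist_eq_add_one_of_mem_support r hp hxy hy)
  · exact .inl (hT.dist_eq_add_one_of_mem_support r hq hxy.symm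
      (hT.isAcyclic.mem_support_of_ne_mem_support_of_adj_of_isPath
        (q.isPath_of_length_eq_dist hq) (p.isPath_of_length_eq_dist hp) hxy.symm hy))

lemma eq_of_adj_of_dist_add_one {x y y' : V} (hy : T.Adj x y) (hy' : T.Adj x y')
    (hyx : T.dist r y + 1 = T.dist r x) (hy'x : T.dist r y' + 1 = T.dist r x) : y = y' := by
  obtain ⟨p, hp⟩ := hT.connected.exists_walk_length_eq_dist r x
  have hpen : ∀ {y}, T.Adj x y → T.dist r y + 1 = T.dist r x → y = p.penultimate := by
    intro y hy hyx
    refine hT.isAcyclic.eq_penultimate_of_adj_end (p.isPath_of_length_eq_dist hp) hy ?_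
    by_contra hyp
    obtain ⟨q, hq⟩ := hT.connected.exists_walk_length_eq_dist r y
    have := hT.dist_eq_add_one_of_mem_support r hq hy.symm
      (hT.isAcyclic.mem_support_of_ne_mem_support_of_adj_of_isPath
        (q.isPath_of_length_eq_dist hq) (p.isPath_of_length_eq_dist hp) hy.symm hyp)
    omega
  rw [hpen hy hyx, hpen hy' hy'x]

lemma exists_adj_dist_add_one {x : V} (hx : x ≠ r) :
    ∃ z, T.Adj x z ∧ T.dist r z + 1 = T.dist r x := by
  obtain ⟨p, hp⟩ := hT.connected.exists_walk_length_eq_dist x r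
  cases p with
  | nil => exact absurd rfl hx
  | @cons _ z _ hxz p =>
    refine ⟨z, hxz, ?_⟩
    have hz : T.dist r z ≤ p.length := dist_comm (G := T) ▸ dist_le p
    rw [Walk.length_cons, dist_comm] at hp
    rcases hT.dist_adj r hxz with h | h <;> omega

/-- By uniqueness of the neighbor towards the root, a path that has moved away from the root keeps
moving away. -/
lemma dist_le_of_isPath_of_dist_eq_add_one {a a₁ b : V} (w : T.Walk a₁ b) (hw : w.IsPath)
    (haa₁ : T.Adj a a₁) (hd : T.dist r a₁ = T.dist r a + 1) (ha : a ∉ w.support) :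
    ∀ v ∈ w.support, T.dist r a₁ ≤ T.dist r v := by
  induction w generalizing a with
  | nil => simp
  | @cons a₁ a₂ b ha₁a₂ w ih =>
    rw [Walk.cons_isPath_iff] at hw
    have hd₂ : T.dist r a₂ = T.dist r a₁ + 1 := by
      refine (hT.dist_adj r ha₁a₂).resolve_right fun h => ha ?_
      rw [hT.eq_of_adj_of_dist_add_one r haa₁.symm ha₁a₂ hd.symm h.symm]
      simp
    intro v hv
    rw [Walk.support_cons, List.mem_cons] at hv
    rcases hv with rfl | hv
    · exact le_rfl
    · have := ih hw.1 ha₁a₂ hd₂ hw.2 v hv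
      omega

lemma exists_adj_mem_support_of_dist_le {x c v : V} (q : T.Walk x c) (hq : q.IsPath)
    (hv : v ∈ q.support) (hvx : v ≠ x) (hd : T.dist r v ≤ T.dist r x) :
    ∃ y ∈ q.support, T.Adj x y ∧ T.dist r y + 1 = T.dist r x := by
  cases q with
  | nil => simp_all
  | @cons _ x₁ _ hxx₁ q =>
    rw [Walk.cons_isPath_iff] at hq
    refine ⟨x₁, by simp, hxx₁, ?_⟩
    rcases hT.dist_adj r hxx₁ with h | h
    · rw [Walk.support_cons, List.mem_cons] at hv
      have := hT.dist_le_of_isPath_of_dist_eq_add_one r q hq.1 hxx₁ h hq.2 v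
        (hv.resolve_left hvx)
      omega
    · exact h.symm

lemma mem_of_adj_of_dist_add_one {Q : Set V} (hQ : T.IsPathSet Q) {m : V} (hm : m ∈ Q)
    (hmin : ∀ x ∈ Q, T.dist r m ≤ T.dist r x) {x y : V} (hx : x ∈ Q) (hxm : x ≠ m)
    (hxy : T.Adj x y) (hyx : T.dist r y + 1 = T.dist r x) : y ∈ Q := by
  classical
  obtain ⟨a, b, w, hw, rfl⟩ := hQ
  obtain ⟨c, q, hq, hmq, hqw⟩ := hw.exists_isPath_from_of_mem_support hx hm
  obtain ⟨y', hy'q, hxy', hy'x⟩ :=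
    hT.exists_adj_mem_support_of_dist_le r q hq hmq (Ne.symm hxm) (hmin x hx)
  rw [hT.eq_of_adj_of_dist_add_one r hxy hxy' hyx hy'x]
  exact hqw hy'q

end IsTree

theorem IsTree.exists_pendant_path [Finite V] (hT : T.IsTree) {P : Set (Set V)}
    (hP : T.IsPathCover P) (hP2 : 2 ≤ P.ncard) :
    ∃ Q ∈ P, ∃ m ∈ Q, ∃ z ∉ Q, ∀ x ∈ Q, ∀ y ∉ Q, T.Adj x y → x = m ∧ y = z := by
  obtain ⟨r⟩ := hT.connected.nonempty
  have htop : ∀ Q ∈ P, ∃ t ∈ Q, ∀ x ∈ Q, T.dist r t ≤ T.dist r x := by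
    intro Q hQ
    obtain ⟨a, b, w, -, hw⟩ := hP.1 Q hQ
    exact Set.exists_min_image Q _ Q.toFinite ⟨a, hw ▸ w.start_mem_support⟩
  obtain ⟨Q₁, Q₂, hQ₁, hQ₂, hQ₁₂⟩ := (Set.one_lt_ncard_iff P.toFinite).mp hP2
  obtain ⟨Q', hQ', hrQ'⟩ : ∃ Q' ∈ P, r ∉ Q' := by
    by_cases hr : r ∈ Q₁
    · exact ⟨Q₂, hQ₂, Set.disjoint_left.mp (hP.2.1 hQ₁ hQ₂ hQ₁₂) hr⟩
    · exact ⟨Q₁, hQ₁, hr⟩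
  obtain ⟨t', ht'Q', ht'min⟩ := htop Q' hQ'
  -- `m` is, among the vertices nearest to the root in their covering path, a farthest one.
  obtain ⟨m, ⟨Q, hQ, hmQ, hmin⟩, hmax⟩ :=
    Set.exists_max_image {t | ∃ Q ∈ P, t ∈ Q ∧ ∀ x ∈ Q, T.dist r t ≤ T.dist r x} (T.dist r)
      (Set.toFinite _) ⟨t', Q', hQ', ht'Q', ht'min⟩
  have hmr : m ≠ r := by
    rintro rfl
    have := hmax t' ⟨Q', hQ', ht'Q', ht'min⟩
    rw [dist_self, Nat.le_zero, hT.connected.dist_eq_zero_iff] at this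
    exact hrQ' (this ▸ ht'Q')
  obtain ⟨z, hmz, hzm⟩ := hT.exists_adj_dist_add_one r hmr
  refine ⟨Q, hQ, m, hmQ, z, fun hz => by have := hmin z hz; omega, fun x hx y hy hxy => ?_⟩
  rcases hT.dist_adj r hxy with hyx | hxy'
  · obtain ⟨Qy, hQy, hyQy⟩ := Set.mem_sUnion.mp (hP.2.2 ▸ Set.mem_univ y)
    have hxQy : x ∉ Qy :=
      Set.disjoint_left.mp (hP.2.1 hQ hQy fun h => hy (h ▸ hyQy)) hx
    obtain ⟨t, htQy, htmin⟩ := htop Qy hQy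
    obtain rfl : y = t := by
      by_contra hyt
      exact hxQy (hT.mem_of_adj_of_dist_add_one r (hP.1 Qy hQy) htQy htmin hyQy hyt hxy.symm
        hyx.symm)
    have := hmax y ⟨Qy, hQy, hyQy, htmin⟩
    have := hmin x hx
    omega
  · obtain rfl : x = m := by
      by_contra hxm
      exact hy (hT.mem_of_adj_of_dist_add_one r (hP.1 Q hQ) hmQ hmin hx hxm hxy hxy'.symm)
    exact ⟨rfl, hT.eq_of_adj_of_dist_add_one r hxy hmz hxy'.symm hzm⟩

/-- Color one end `a` of the path `Q`: forcing runs along `Q` from `a` to `m`, then through the rest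
of the graph, then along the rest of `Q`. -/
theorem IsAcyclic.exists_isZeroForcingSet_of_pendant (hG : G.IsAcyclic) {Q : Set V}
    (hQ : G.IsPathSet Q) {m : V} (hm : m ∈ Q) (hcross : ∀ x ∈ Q, ∀ y ∉ Q, G.Adj x y → x = m)
    {S' : Set ↥Qᶜ} (hS' : (G.induce Qᶜ).IsZeroForcingSet S') :
    ∃ S, G.IsZeroForcingSet S ∧ S.ncard ≤ S'.ncard + 1 := by
  classical
  obtain ⟨a, b, w, hw, rfl⟩ := hQ
  set S := Subtype.val '' S' ∪ {a}
  have ha : G.Forced S a := .init a (by simp [S])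
  have hm_forced : G.Forced S m := by
    have h := hG.forced_of_isPath_append (S := S) (w.takeUntil m hm) (w.dropUntil m hm)
    rw [w.take_spec hm] at h
    refine h hw ha (fun x hx hxm y hy hxy => absurd (hcross x ?_ y hy hxy) hxm) m
      (Walk.end_mem_support _)
    exact w.support_takeUntil_subset_support hm hx
  have hout : ∀ v ∉ w.support, G.Forced S v := fun v hv =>
    (hS' ⟨v, hv⟩).of_induce
      (fun u hu => .init _ (Set.mem_union_left _ (Set.mem_image_of_mem _ hu)))
      fun u x hx hux => hcross x (not_not.mp hx) u u.2 hux.symm ▸ hm_forced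
  refine ⟨S, fun v => ?_, ?_⟩
  · by_cases hv : v ∈ w.support
    · have h := hG.forced_of_isPath_append (S := S) w .nil
      rw [Walk.append_nil] at h
      exact h hw ha (fun x _ _ y hy _ => hout y hy) v hv
    · exact hout v hv
  · calc S.ncard ≤ (Subtype.val '' S').ncard + ({a} : Set V).ncard := Set.ncard_union_le _ _
      _ = S'.ncard + 1 := by
        rw [Set.ncard_image_of_injective _ Subtype.val_injective, Set.ncard_singleton]

theorem IsTree.exists_isZeroForcingSet_ncard_le {V : Type*} [Finite V] {T : SimpleGraph V}
    (hT : T.IsTree) {P : Set (Set V)} (hP : T.IsPathCover P) :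
    ∃ S, T.IsZeroForcingSet S ∧ S.ncard ≤ P.ncard := by
  by_cases hP2 : 2 ≤ P.ncard
  · obtain ⟨Q, hQ, m, hm, z, hz, hcross⟩ := hT.exists_pendant_path hP hP2
    have : Nat.card ↥Qᶜ < Nat.card V :=
      Nat.card_coe_set_eq Qᶜ ▸ Set.ncard_lt_card fun h => (h ▸ Set.mem_univ m : m ∈ Qᶜ) hm
    obtain ⟨S', hS', hS'P⟩ := IsTree.exists_isZeroForcingSet_ncard_le
      (hT.induce_compl hz fun x hx y hy hxy => (hcross x hx y hy hxy).2) (hP.induce_compl hQ)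
    obtain ⟨S, hS, hSS'⟩ := hT.isAcyclic.exists_isZeroForcingSet_of_pendant (hP.1 Q hQ) hm
      (fun x hx y hy hxy => (hcross x hx y hy hxy).1) hS'
    have := Set.ncard_image_le (f := (Subtype.val ⁻¹' · : Set V → Set ↥Qᶜ)) (P \ {Q}).toFinite
    have := Set.ncard_sdiff_singleton_of_mem hQ
    exact ⟨S, hS, by omega⟩
  · obtain ⟨v⟩ := hT.connected.nonempty
    obtain ⟨Q, hQ, hvQ⟩ := Set.mem_sUnion.mp (hP.2.2 ▸ Set.mem_univ v)
    have hall : ∀ u, u ∈ Q := fun u => by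
      obtain ⟨Q', hQ', huQ'⟩ := Set.mem_sUnion.mp (hP.2.2 ▸ Set.mem_univ u)
      rwa [Set.ncard_le_one P.toFinite |>.mp (by omega) Q' hQ' Q hQ] at huQ'
    obtain ⟨S, hS, hS1⟩ := hT.isAcyclic.exists_isZeroForcingSet_of_pendant (hP.1 Q hQ) hvQ
      (fun _ _ y hy _ => absurd (hall y) hy) (S' := ∅) fun u => absurd (hall u) u.2
    have := (Set.ncard_pos P.toFinite).mpr ⟨Q, hQ⟩
    rw [Set.ncard_empty] at hS1
    exact ⟨S, hS, by omega⟩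
termination_by Nat.card V

theorem IsTree.zeroForcingNumber_le_pathCoverNumber [Finite V] (hT : T.IsTree) :
    T.zeroForcingNumber ≤ T.pathCoverNumber := by
  obtain ⟨P, hP, hPpc⟩ := T.exists_isPathCover_ncard_eq
  obtain ⟨S, hS, hSP⟩ := hT.exists_isZeroForcingSet_ncard_le hP
  exact hPpc ▸ (zeroForcingNumber_le hS).trans hSP

end SimpleGraph

theorem stmt7 {V : Type*} [Fintype V] (T : SimpleGraph V) (hT : T.IsTree) :
    T.zeroForcingNumber = T.pathCoverNumber :=
  le_antisymm hT.zeroForcingNumber_le_pathCoverNumber T.pathCoverNumber_le_zeroForcingNumber
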